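/- arXiv:1903.05613 — 3 statements merged into one kernel-verified Lean document; each statement's English description precedes it below -/
import Mathlib

section
/- Let G be a simple connected graph with p vertices and diameter d, let L₀ ⊆ V(G) be nonempty with k = max_{x,y ∈ L₀} d(x,y), and for each vertex v let L(v) = d(v, L₀). Let δ = 1 if |L₀| = 1 and δ = 0 if |L₀| ≥ 2. Then the radio number of G satisfies rn(G) ≥ (p − 1)(d − k + 1) + δ − 2 · Σ_{v ∈ V(G)} L(v). -/
open SimpleGraph Finset

/-- The Petersen graph as the Kneser graph K(5,2). -/
def petersen : SimpleGraph {s : Finset (Fin 5) // s.card = 2} where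
  Adj a b := Disjoint a.1 b.1
  symm := ⟨fun _ _ h => h.symm⟩
  loopless := ⟨fun a h => by
    have h0 : a.1 = ⊥ := disjoint_self.mp h
    have h2 := a.2
    rw [h0] at h2
    simp at h2⟩

/-- A radio labeling of `G`: for all distinct `u, v`,
`d(u,v) + |φ(u) - φ(v)| ≥ diam(G) + 1`. -/
def IsRadioLabeling {V : Type*} (G : SimpleGraph V) (φ : V → ℕ) : Prop :=
  ∀ u v : V, u ≠ v → (G.diam : ℤ) + 1 ≤ (G.dist u v : ℤ) + |(φ u : ℤ) - (φ v : ℤ)|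

/-- The span of a labeling: the maximum difference between two labels. -/
noncomputable def span {V : Type*} (φ : V → ℕ) : ℕ :=
  sSup (Set.range fun p : V × V => φ p.1 - φ p.2)

/-- The radio number of `G`: the minimum span over all radio labelings. -/
noncomputable def radioNumber {V : Type*} (G : SimpleGraph V) : ℕ :=
  sInf {s | ∃ φ : V → ℕ, IsRadioLabeling G φ ∧ span φ = s}

/-- `d(v, S)`: the minimum distance from `v` to a vertex of `S`. -/
noncomputable def distToSet {V : Type*} (G : SimpleGraph V) (v : V) (S : Finset V) : ℕ :=
  sInf ((fun w => G.dist v w) '' ↑S)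

/-- `diam(S)`: the maximum distance in `G` between two vertices of `S`. -/
noncomputable def setDiam {V : Type*} (G : SimpleGraph V) (S : Finset V) : ℕ :=
  sSup {d | ∃ x ∈ S, ∃ y ∈ S, G.dist x y = d}

/-! The labels of a radio labeling, read in increasing order along an enumeration
`x₀, …, x_{p-1}` of the vertices, must jump by at least `diam G + 1 - d(xᵢ, xᵢ₊₁)` at each
step, and through `L₀` we have `d(xᵢ, xᵢ₊₁) ≤ L(xᵢ) + k + L(xᵢ₊₁)`. Summing the `p - 1`
steps, every `L(xᵢ)` is counted twice except for the two endpoints, whose levels add up to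
at least `δ` since distinct vertices cannot both lie in a one-point `L₀`. -/

section Telescoping

variable {R : Type*} [CommRing R] [LinearOrder R] [IsStrictOrderedRing R]

theorem mul_sub_two_mul_sum_add_le_sub_of_step (f g : ℕ → R) (c : R) (m : ℕ)
    (hstep : ∀ i < m, c - (g i + g (i + 1)) ≤ f (i + 1) - f i) :
    m * c - 2 * ∑ i ∈ range (m + 1), g i + g 0 + g m ≤ f m - f 0 := by
  induction m with
  | zero => simp only [zero_add, range_one, sum_singleton, Nat.cast_zero]; linarith
  | succ m ih =>
    have hlast := hstep m (Nat.lt_succ_self m)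
    have hprev := ih fun i hi => hstep i (Nat.lt_succ_of_lt hi)
    rw [sum_range_succ]
    push_cast
    linarith

end Telescoping

theorem exists_monotone_enumeration {V : Type*} [Fintype V] (φ : V → ℕ) {m : ℕ}
    (hm : Fintype.card V = m + 1) :
    ∃ y : ℕ → V, Monotone (φ ∘ y) ∧ Set.InjOn y (Set.Iic m) ∧
      ∀ {M : Type*} [AddCommMonoid M] (f : V → M), ∑ i ∈ range (m + 1), f (y i) = ∑ v, f v := by
  let e : V ≃ Fin (m + 1) := (Fintype.equivFin V).trans (finCongr hm)
  let x : Fin (m + 1) ≃ V := (Tuple.sort (φ ∘ e.symm)).trans e.symm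
  refine ⟨fun i => x ⟨min i m, by omega⟩, fun i j hij => ?_, fun i hi j hj hij => ?_,
    fun f => ?_⟩
  · exact Tuple.monotone_sort (φ ∘ e.symm) (Fin.mk_le_mk.2 (min_le_min_right m hij))
  · simpa [min_eq_left (Set.mem_Iic.1 hi), min_eq_left (Set.mem_Iic.1 hj)] using x.injective hij
  · rw [← Fin.sum_univ_eq_sum_range (fun i => f (x ⟨min i m, by omega⟩)), ← x.sum_comp f]
    exact sum_congr rfl fun i _ => by simp [min_eq_left (Nat.le_of_lt_succ i.2)]

section Labeling

variable {V : Type*}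

theorem sub_le_span [Finite V] (φ : V → ℕ) (u v : V) : φ u - φ v ≤ span φ :=
  le_csSup (Set.finite_range _).bddAbove ⟨(u, v), rfl⟩

theorem exists_isRadioLabeling [Finite V] (G : SimpleGraph V) : ∃ φ, IsRadioLabeling G φ := by
  obtain ⟨n, ⟨e⟩⟩ := Finite.exists_equiv_fin V
  refine ⟨fun v => (G.diam + 1) * e v, fun u v huv => ?_⟩
  have hne : ((e u : ℕ) : ℤ) - (e v : ℕ) ≠ 0 :=
    sub_ne_zero.2 fun h => huv (e.injective (Fin.ext (by exact_mod_cast h)))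
  have hjump : (G.diam : ℤ) + 1 ≤
      |(((G.diam + 1) * (e u : ℕ) : ℕ) : ℤ) - (((G.diam + 1) * (e v : ℕ) : ℕ) : ℤ)| := by
    push_cast
    rw [← mul_sub, abs_mul, abs_of_nonneg (by positivity)]
    exact le_mul_of_one_le_right (by positivity) (Int.one_le_abs hne)
  linarith [Int.natCast_nonneg (G.dist u v)]

theorem exists_isRadioLabeling_span_eq_radioNumber [Finite V] (G : SimpleGraph V) :
    ∃ φ, IsRadioLabeling G φ ∧ span φ = radioNumber G := by
  obtain ⟨φ, hφ⟩ := exists_isRadioLabeling G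
  exact Nat.sInf_mem (s := {s | ∃ φ, IsRadioLabeling G φ ∧ span φ = s}) ⟨span φ, φ, hφ, rfl⟩

theorem IsRadioLabeling.exists_ne_sub_two_mul_sum_le_span [Fintype V] {G : SimpleGraph V}
    {φ : V → ℕ} (hφ : IsRadioLabeling G φ) (hcard : 2 ≤ Fintype.card V) (k : ℕ) (g : V → ℕ)
    (hdist : ∀ u v, G.dist u v ≤ g u + k + g v) :
    ∃ u v, u ≠ v ∧ ((Fintype.card V : ℤ) - 1) * ((G.diam : ℤ) - k + 1)
      - 2 * ∑ w, (g w : ℤ) + g u + g v ≤ span φ := by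
  obtain ⟨m, hm⟩ : ∃ m, Fintype.card V = m + 1 := ⟨Fintype.card V - 1, by omega⟩
  obtain ⟨y, hmono, hinj, hsum⟩ := exists_monotone_enumeration φ hm
  have hne : ∀ i < m, y (i + 1) ≠ y i := fun i hi h => by
    have := hinj (Set.mem_Iic.2 (show i + 1 ≤ m by omega)) (Set.mem_Iic.2 hi.le) h
    omega
  have hstep : ∀ i < m, ((G.diam : ℤ) - k + 1) - ((g (y i) : ℤ) + g (y (i + 1))) ≤
      (φ (y (i + 1)) : ℤ) - φ (y i) := by
    intro i hi
    have hrad := hφ _ _ (hne i hi)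
    have hle : (φ (y i) : ℤ) ≤ φ (y (i + 1)) := by exact_mod_cast hmono (Nat.le_succ i)
    rw [abs_of_nonneg (sub_nonneg.2 hle)] at hrad
    have hd : (G.dist (y (i + 1)) (y i) : ℤ) ≤ g (y (i + 1)) + k + g (y i) := by
      exact_mod_cast hdist _ _
    linarith
  have htel := mul_sub_two_mul_sum_add_le_sub_of_step (fun i => (φ (y i) : ℤ))
    (fun i => (g (y i) : ℤ)) _ m hstep
  refine ⟨y m, y 0, fun h => by
    have := hinj (Set.mem_Iic.2 le_rfl) (Set.mem_Iic.2 (Nat.zero_le m)) h; omega, ?_⟩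
  have hspan : ((φ (y m) - φ (y 0) : ℕ) : ℤ) ≤ span φ := by exact_mod_cast sub_le_span φ _ _
  have hle : φ (y 0) ≤ φ (y m) := hmono (Nat.zero_le m)
  rw [hm, ← hsum]
  push_cast at htel hspan ⊢
  rw [Nat.cast_sub hle] at hspan
  linarith

end Labeling

section DistToSet

variable {V : Type*} {G : SimpleGraph V}

theorem distToSet_le_dist {S : Finset V} {v w : V} (hw : w ∈ S) :
    distToSet G v S ≤ G.dist v w :=
  Nat.sInf_le ⟨w, hw, rfl⟩

theorem exists_mem_dist_eq_distToSet {S : Finset V} (hS : S.Nonempty) (v : V) :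
    ∃ w ∈ S, G.dist v w = distToSet G v S :=
  Nat.sInf_mem (hS.to_set.image _)

theorem distToSet_singleton (v w : V) : distToSet G v {w} = G.dist v w := by
  simp [distToSet]

theorem dist_le_setDiam {S : Finset V} {x y : V} (hx : x ∈ S) (hy : y ∈ S) :
    G.dist x y ≤ setDiam G S := by
  refine le_csSup ⟨(S ×ˢ S).sup fun p => G.dist p.1 p.2, ?_⟩ ⟨x, hx, y, hy, rfl⟩
  rintro _ ⟨a, ha, b, hb, rfl⟩
  exact le_sup (f := fun p : V × V => G.dist p.1 p.2) (Finset.mem_product (p := (a, b)) |>.2 ⟨ha, hb⟩)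

theorem SimpleGraph.Connected.dist_le_distToSet_add_setDiam_add_distToSet (hG : G.Connected)
    {S : Finset V} (hS : S.Nonempty) (u v : V) :
    G.dist u v ≤ distToSet G u S + setDiam G S + distToSet G v S := by
  obtain ⟨a, ha, hua⟩ := exists_mem_dist_eq_distToSet (G := G) hS u
  obtain ⟨b, hb, hvb⟩ := exists_mem_dist_eq_distToSet (G := G) hS v
  calc G.dist u v ≤ G.dist u a + G.dist a b + G.dist b v :=
        hG.dist_triangle.trans (Nat.add_le_add_right hG.dist_triangle _)
    _ = distToSet G u S + G.dist a b + distToSet G v S := by rw [hua, dist_comm (u := b), hvb]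
    _ ≤ distToSet G u S + setDiam G S + distToSet G v S := by
        gcongr; exact dist_le_setDiam ha hb

theorem SimpleGraph.Connected.one_le_distToSet_singleton_add (hG : G.Connected) {u v : V} (huv : u ≠ v)
    (w : V) : 1 ≤ distToSet G u {w} + distToSet G v {w} := by
  rw [distToSet_singleton, distToSet_singleton]
  by_cases huw : u = w
  · subst huw; have := hG.pos_dist_of_ne huv.symm; omega
  · have := hG.pos_dist_of_ne huw; omega

end DistToSet

theorem stmt_3 {V : Type*} [Fintype V] (G : SimpleGraph V) (hG : G.Connected)
    (hcard : 2 ≤ Fintype.card V) (L₀ : Finset V) (hL : L₀.Nonempty) :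
    ((Fintype.card V : ℤ) - 1) * ((G.diam : ℤ) - (setDiam G L₀ : ℤ) + 1)
      + (if L₀.card = 1 then 1 else 0)
      - 2 * ∑ v : V, (distToSet G v L₀ : ℤ) ≤ (radioNumber G : ℤ) := by
  obtain ⟨φ, hφ, hspan⟩ := exists_isRadioLabeling_span_eq_radioNumber G
  obtain ⟨u, v, huv, hbound⟩ := hφ.exists_ne_sub_two_mul_sum_le_span hcard (setDiam G L₀)
    (fun v => distToSet G v L₀) (hG.dist_le_distToSet_add_setDiam_add_distToSet hL)
  have hδ : (if L₀.card = 1 then 1 else 0 : ℤ) ≤ distToSet G u L₀ + distToSet G v L₀ := by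
    split_ifs with h
    · obtain ⟨w, rfl⟩ := card_eq_one.1 h
      exact_mod_cast hG.one_le_distToSet_singleton_add huv w
    · positivity
  rw [← hspan]
  linarith
end

section
/- Let n ≥ 4 be even and m ≥ 3. Setting L₀ = {(u_{n/2}, v_j), (u_{n/2+1}, v_j) : 1 ≤ j ≤ m} ⊆ V(P_n □ K_m), one has diam(L₀) = 2 (with respect to distances in P_n □ K_m) and Σ_{x ∈ V(P_n □ K_m)} d(x, L₀) = mn(n−2)/4. -/
open SimpleGraph Finset

/-!
In `P_n □ K_m` the distance is `|i - i'| + [j ≠ j']`, so two vertices of the two middle rows are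
at distance at most `2`, with equality for different rows and columns. The vertex of `L₀` nearest
to `x` lies in the column of `x`, so `d(x, L₀)` depends only on the row of `x`; summed over the rows
this gives twice `0 + 1 + ⋯ + (n/2 - 1)`, i.e. `(n/2)(n/2 - 1)`, once for each of the `m` columns.
-/

namespace SimpleGraph

variable {α β : Type*} {G : SimpleGraph α} {H : SimpleGraph β}

lemma dist_boxProd (hG : G.Preconnected) (hH : H.Preconnected) (x y : α × β) :
    (G □ H).dist x y = G.dist x.1 y.1 + H.dist x.2 y.2 := by
  have hGH : (G □ H).Reachable x y := reachable_boxProd.mpr ⟨hG _ _, hH _ _⟩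
  have h := edist_boxProd (G := G) (H := H) x y
  rw [← hGH.coe_dist_eq_edist, ← (hG x.1 y.1).coe_dist_eq_edist,
    ← (hH x.2 y.2).coe_dist_eq_edist] at h
  exact_mod_cast h

lemma pathGraph_dist_le_sub {n : ℕ} {i j : Fin n} (hij : i ≤ j) :
    (pathGraph n).dist i j ≤ j - i := by
  induction hk : (j : ℕ) - i generalizing i with
  | zero => rw [Fin.le_antisymm hij (Fin.le_iff_val_le_val.mpr (by omega)), dist_self]
  | succ k ih =>
    have hi : (i : ℕ) + 1 < n := by omega
    have hadj : (pathGraph n).Adj i ⟨i + 1, hi⟩ := pathGraph_adj.mpr (Or.inl rfl)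
    calc (pathGraph n).dist i j
        ≤ (pathGraph n).dist i ⟨i + 1, hi⟩ + (pathGraph n).dist ⟨i + 1, hi⟩ j :=
          hadj.reachable.dist_triangle_left j
      _ ≤ 1 + k := by
          rw [dist_eq_one_iff_adj.mpr hadj]
          exact Nat.add_le_add_left (ih (Fin.le_iff_val_le_val.mpr (by dsimp only; omega))
            (by dsimp only; omega)) 1
      _ = k + 1 := Nat.add_comm 1 k

lemma Walk.dist_val_le_length_of_pathGraph {n : ℕ} {i j : Fin n}
    (w : (pathGraph n).Walk i j) : Nat.dist i j ≤ w.length := by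
  induction w with
  | nil => simp
  | @cons a b c hab w ih =>
    have hab : Nat.dist a b = 1 := by
      rcases pathGraph_adj.mp hab with h | h <;> simp only [Nat.dist] <;> omega
    have := Nat.dist.triangle_inequality a b c
    rw [length_cons]
    omega

lemma pathGraph_dist {n : ℕ} (i j : Fin n) : (pathGraph n).dist i j = Nat.dist i j := by
  refine le_antisymm ?_ ?_
  · rcases le_total i j with hij | hij
    · have := pathGraph_dist_le_sub hij
      simp only [Nat.dist]
      omega
    · have := pathGraph_dist_le_sub hij
      rw [dist_comm] at this
      simp only [Nat.dist]
      omega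
  · obtain ⟨w, hw⟩ := (pathGraph_preconnected n i j).exists_walk_length_eq_dist
    exact hw ▸ w.dist_val_le_length_of_pathGraph

lemma pathGraph_boxProd_top_dist {n m : ℕ} (x y : Fin n × Fin m) :
    (pathGraph n □ (⊤ : SimpleGraph (Fin m))).dist x y =
      Nat.dist x.1 y.1 + if x.2 = y.2 then 0 else 1 := by
  rw [dist_boxProd (pathGraph_preconnected n) preconnected_top, pathGraph_dist, dist_top]

end SimpleGraph

open SimpleGraph

/-- Rows are zero-based: `twoLayers n m (n / 2)` is the paper's `L₀ = {u_{n/2}, u_{n/2+1}} × V(K_m)`. -/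
def twoLayers (n m h : ℕ) : Finset (Fin n × Fin m) := {x | x.1.val = h - 1 ∨ x.1.val = h}

lemma mem_twoLayers {n m h : ℕ} {x : Fin n × Fin m} :
    x ∈ twoLayers n m h ↔ x.1.val = h - 1 ∨ x.1.val = h := by
  simp [twoLayers]

lemma dist_le_two_of_mem_twoLayers {n m h : ℕ} {x y : Fin n × Fin m}
    (hx : x ∈ twoLayers n m h) (hy : y ∈ twoLayers n m h) :
    (pathGraph n □ (⊤ : SimpleGraph (Fin m))).dist x y ≤ 2 := by
  rw [mem_twoLayers] at hx hy
  rw [pathGraph_boxProd_top_dist, Nat.dist]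
  split <;> omega

lemma setDiam_twoLayers {n m h : ℕ} (hh : 1 ≤ h) (hhn : h < n) (hm : 2 ≤ m) :
    setDiam (pathGraph n □ (⊤ : SimpleGraph (Fin m))) (twoLayers n m h) = 2 := by
  let a : Fin n × Fin m := (⟨h - 1, by omega⟩, ⟨0, by omega⟩)
  let b : Fin n × Fin m := (⟨h, hhn⟩, ⟨1, by omega⟩)
  have ha : a ∈ twoLayers n m h := mem_twoLayers.mpr (Or.inl rfl)
  have hb : b ∈ twoLayers n m h := mem_twoLayers.mpr (Or.inr rfl)
  have hab : (pathGraph n □ (⊤ : SimpleGraph (Fin m))).dist a b = 2 := by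
    rw [pathGraph_boxProd_top_dist, if_neg (by simp [a, b]), Nat.dist]
    simp only [a, b]
    omega
  have hbdd : ∀ d ∈ {d | ∃ x ∈ twoLayers n m h, ∃ y ∈ twoLayers n m h,
      (pathGraph n □ (⊤ : SimpleGraph (Fin m))).dist x y = d}, d ≤ 2 := by
    rintro d ⟨x, hx, y, hy, rfl⟩
    exact dist_le_two_of_mem_twoLayers hx hy
  exact le_antisymm (csSup_le ⟨2, a, ha, b, hb, hab⟩ hbdd)
    (le_csSup ⟨2, hbdd⟩ ⟨a, ha, b, hb, hab⟩)

lemma distToSet_twoLayers {n m h : ℕ} (hhn : h < n) (x : Fin n × Fin m) :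
    distToSet (pathGraph n □ (⊤ : SimpleGraph (Fin m))) x (twoLayers n m h) =
      if x.1.val < h then h - 1 - x.1.val else x.1.val - h := by
  let nearest : Fin n × Fin m := (⟨if x.1.val < h then h - 1 else h, by split <;> omega⟩, x.2)
  have hnearest : nearest ∈ twoLayers n m h := by
    rw [mem_twoLayers]
    dsimp only [nearest]
    split <;> simp
  apply le_antisymm
  · refine Nat.sInf_le ⟨nearest, hnearest, ?_⟩
    dsimp only
    rw [pathGraph_boxProd_top_dist, if_pos rfl, Nat.dist]
    simp only [nearest]
    split <;> omega
  · refine le_csInf ⟨_, nearest, hnearest, rfl⟩ ?_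
    rintro d ⟨y, hy, rfl⟩
    rw [Finset.mem_coe, mem_twoLayers] at hy
    simp only [pathGraph_boxProd_top_dist, Nat.dist]
    split <;> split <;> omega

lemma sum_range_dist_twoLayers (h : ℕ) :
    ∑ k ∈ Finset.range (h + h), (if k < h then h - 1 - k else k - h) = h * (h - 1) := by
  have hlow : ∑ k ∈ Finset.range h, (if k < h then h - 1 - k else k - h) =
      ∑ k ∈ Finset.range h, k := by
    rw [← Finset.sum_range_reflect (fun k => k) h]
    exact Finset.sum_congr rfl fun k hk => if_pos (Finset.mem_range.mp hk)
  have hhigh : ∑ k ∈ Finset.range h, (if h + k < h then h - 1 - (h + k) else h + k - h) =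
      ∑ k ∈ Finset.range h, k :=
    Finset.sum_congr rfl fun k _ => by rw [if_neg (by omega)]; omega
  rw [Finset.sum_range_add, hlow, hhigh, ← Finset.sum_range_id_mul_two, Nat.mul_two]

theorem stmt_13 (n m : ℕ) (hn : 4 ≤ n) (he : Even n) (hm : 3 ≤ m) :
    setDiam (pathGraph n □ (⊤ : SimpleGraph (Fin m)))
        ({x : Fin n × Fin m | x.1.val = n / 2 - 1 ∨ x.1.val = n / 2} : Finset _) = 2
    ∧ 4 * ∑ x : Fin n × Fin m,
        distToSet (pathGraph n □ (⊤ : SimpleGraph (Fin m))) x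
          ({x : Fin n × Fin m | x.1.val = n / 2 - 1 ∨ x.1.val = n / 2} : Finset _)
      = m * n * (n - 2) := by
  obtain ⟨h, rfl⟩ := he
  have hhalf : (h + h) / 2 = h := by omega
  refine ⟨hhalf ▸ setDiam_twoLayers (by omega) (by omega) (by omega), ?_⟩
  change 4 * ∑ x, distToSet _ x (twoLayers (h + h) m ((h + h) / 2)) = _
  rw [hhalf, Fintype.sum_prod_type_right]
  simp only [distToSet_twoLayers (show h < h + h by omega), Finset.sum_const, Finset.card_univ,
    Fintype.card_fin, smul_eq_mul]
  rw [Fin.sum_univ_eq_sum_range (fun k => if k < h then h - 1 - k else k - h),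
    sum_range_dist_twoLayers, show h + h - 2 = 2 * (h - 1) by omega]
  ring
end

section
/- Let G be a connected graph of diameter d and φ a radio labeling of G with induced ordering x₀,...,x_{p−1} of V(G). If L₀ ⊆ V(G) with k = diam(L₀), then for any indices i < j, φ(x_j) − φ(x_i) ≥ (j−i)(d−k+1) − 2 Σ_{t=i}^{j} d(x_t, L₀) + d(x_i, L₀) + d(x_j, L₀). -/
open SimpleGraph Finset

/-!
Consecutive vertices `x_t, x_{t+1}` are at distance at most `d(x_t, L₀) + k + d(x_{t+1}, L₀)`
(walk to a nearest point of `L₀`, across `L₀`, and out again), so the radio condition forces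
each gap `φ(x_{t+1}) - φ(x_t)` to be at least `d + 1 - k - d(x_t, L₀) - d(x_{t+1}, L₀)`.
Summing these gaps from `i` to `j` counts every inner `d(x_t, L₀)` twice and the two end
terms once.
-/

namespace SimpleGraph

variable {V : Type*} {G : SimpleGraph V}

theorem exists_mem_dist_eq_distToSet (v : V) {S : Finset V} (hS : S.Nonempty) :
    ∃ w ∈ S, G.dist v w = distToSet G v S :=
  Nat.sInf_mem ((Finset.coe_nonempty.2 hS).image _)

theorem dist_le_setDiam {S : Finset V} {u v : V} (hu : u ∈ S) (hv : v ∈ S) :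
    G.dist u v ≤ setDiam G S := by
  have hfin : {d | ∃ x ∈ S, ∃ y ∈ S, G.dist x y = d}.Finite := by
    refine ((S ×ˢ S).finite_toSet.image fun p => G.dist p.1 p.2).subset ?_
    rintro _ ⟨x, hx, y, hy, rfl⟩
    exact ⟨(x, y), Finset.mem_product.2 ⟨hx, hy⟩, rfl⟩
  exact le_csSup hfin.bddAbove ⟨u, hu, v, hv, rfl⟩

theorem Connected.dist_le_distToSet_add_setDiam_add_distToSet_s19 (hG : G.Connected)
    {S : Finset V} (hS : S.Nonempty) (u v : V) :
    G.dist u v ≤ distToSet G u S + setDiam G S + distToSet G v S := by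
  obtain ⟨a, ha, hua⟩ := exists_mem_dist_eq_distToSet (G := G) u hS
  obtain ⟨b, hb, hvb⟩ := exists_mem_dist_eq_distToSet (G := G) v hS
  calc G.dist u v ≤ G.dist u a + G.dist a b + G.dist b v :=
        (hG.dist_triangle (v := b)).trans (Nat.add_le_add_right (hG.dist_triangle (v := a)) _)
    _ = distToSet G u S + G.dist a b + distToSet G v S := by rw [hua, dist_comm (u := b), hvb]
    _ ≤ distToSet G u S + setDiam G S + distToSet G v S := by
        gcongr; exact dist_le_setDiam ha hb

end SimpleGraph

namespace IsRadioLabeling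

variable {V : Type*} {G : SimpleGraph V} {φ : V → ℕ}

theorem diam_add_one_sub_dist_le (hφ : IsRadioLabeling G φ) {u v : V} (huv : u ≠ v)
    (hle : φ u ≤ φ v) : (G.diam : ℤ) + 1 - G.dist u v ≤ φ v - φ u := by
  have h := hφ u v huv
  rw [abs_sub_comm, abs_of_nonneg (by omega)] at h
  linarith

theorem diam_sub_setDiam_add_one_le (hφ : IsRadioLabeling G φ) (hG : G.Connected)
    {S : Finset V} (hS : S.Nonempty) {u v : V} (huv : u ≠ v) (hle : φ u ≤ φ v) :
    (G.diam : ℤ) - setDiam G S + 1 - distToSet G u S - distToSet G v S ≤ φ v - φ u := by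
  have hdist := hG.dist_le_distToSet_add_setDiam_add_distToSet_s19 hS u v
  have hgap := hφ.diam_add_one_sub_dist_le huv hle
  zify at hdist
  linarith

end IsRadioLabeling

theorem Int.le_sub_of_le_sub_succ {f g : ℕ → ℤ} {c : ℤ} {a b : ℕ} (hab : a ≤ b)
    (hstep : ∀ t, a ≤ t → t < b → c - g t - g (t + 1) ≤ f (t + 1) - f t) :
    ((b : ℤ) - a) * c - 2 * ∑ t ∈ Finset.Icc a b, g t + g a + g b ≤ f b - f a := by
  induction b, hab using Nat.le_induction with
  | base =>
    rw [Finset.Icc_self, Finset.sum_singleton, sub_self, zero_mul]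
    linarith
  | succ b hab ih =>
    have hprev := ih fun t hat htb => hstep t hat (by omega)
    have hlast := hstep b hab (by omega)
    rw [Finset.sum_Icc_succ_top (by omega)]
    push_cast
    linarith

open Fin.NatCast in
theorem Fin.le_sub_of_le_sub_succ {n : ℕ} {f g : Fin (n + 1) → ℤ} {c : ℤ}
    {i j : Fin (n + 1)} (hij : i ≤ j)
    (hstep : ∀ t, i ≤ t → t < j → c - g t - g (t + 1) ≤ f (t + 1) - f t) :
    ((j : ℤ) - i) * c - 2 * ∑ t ∈ Finset.Icc i j, g t + g i + g j ≤ f j - f i := by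
  have hsum : ∑ t ∈ Finset.Icc i j, g t = ∑ t ∈ Finset.Icc (i : ℕ) j, g t := by
    rw [← Fin.map_valEmbedding_Icc, Finset.sum_map]
    simp only [Fin.valEmbedding_apply, Fin.cast_val_eq_self]
  have h := Int.le_sub_of_le_sub_succ (f := fun t : ℕ => f t) (g := fun t : ℕ => g t)
    (c := c) (Fin.le_def.1 hij) fun t hit htj => by
      have ht : ((t : Fin (n + 1)) : ℕ) = t := Fin.val_cast_of_lt (by omega)
      simpa only [Nat.cast_succ] using
        hstep t (by rw [Fin.le_def, ht]; exact hit) (by rw [Fin.lt_def, ht]; exact htj)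
  simpa only [Fin.cast_val_eq_self, hsum] using h

theorem stmt_19_general {V : Type*} (G : SimpleGraph V) (hG : G.Connected)
    {m : ℕ}
    (φ : V → ℕ) (hφ : IsRadioLabeling G φ)
    (x : Fin (m + 1) → V) (hx : Function.Bijective x)
    (hmono : ∀ i j : Fin (m + 1), i < j → φ (x i) < φ (x j))
    (L₀ : Finset V) (hL : L₀.Nonempty)
    (i j : Fin (m + 1)) (hij : i < j) :
    ((j : ℤ) - (i : ℤ)) * ((G.diam : ℤ) - (setDiam G L₀ : ℤ) + 1)
        - 2 * ∑ t ∈ Finset.Icc i j, (distToSet G (x t) L₀ : ℤ)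
        + (distToSet G (x i) L₀ : ℤ) + (distToSet G (x j) L₀ : ℤ)
      ≤ (φ (x j) : ℤ) - (φ (x i) : ℤ) := by
  refine Fin.le_sub_of_le_sub_succ (f := fun t => φ (x t))
    (g := fun t => distToSet G (x t) L₀) hij.le fun t _ htj => ?_
  have hlt : t < t + 1 := Fin.lt_add_one_iff.2 (htj.trans_le (Fin.le_last j))
  exact hφ.diam_sub_setDiam_add_one_le hG hL (hx.injective.ne hlt.ne) (hmono _ _ hlt).le

theorem stmt_19 {V : Type*} [Fintype V] (G : SimpleGraph V) (hG : G.Connected)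
    {m : ℕ} (hm : Fintype.card V = m + 1)
    (φ : V → ℕ) (hφ : IsRadioLabeling G φ)
    (x : Fin (m + 1) → V) (hx : Function.Bijective x)
    (hmono : ∀ i j : Fin (m + 1), i < j → φ (x i) < φ (x j))
    (L₀ : Finset V) (hL : L₀.Nonempty)
    (i j : Fin (m + 1)) (hij : i < j) :
    ((j : ℤ) - (i : ℤ)) * ((G.diam : ℤ) - (setDiam G L₀ : ℤ) + 1)
        - 2 * ∑ t ∈ Finset.Icc i j, (distToSet G (x t) L₀ : ℤ)
        + (distToSet G (x i) L₀ : ℤ) + (distToSet G (x j) L₀ : ℤ)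
      ≤ (φ (x j) : ℤ) - (φ (x i) : ℤ) :=
  stmt_19_general G hG φ hφ x hx hmono L₀ hL i j hij
end
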